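/- arXiv:1403.1457 — 4 statements merged into one kernel-verified Lean document; each statement's English description precedes it below -/
import Mathlib

section
/- (Watson's identity) Let e_1, …, e_n be vectors of a real inner product space, let a_1, …, a_n be integers and let d > 1 be an integer, and set e = (a_1 e_1 + ⋯ + a_n e_n)/d. Then Σ_{i=1}^n |a_i|·(N(e − sgn(a_i)·e_i) − N(e_i)) = ((Σ_{i=1}^n |a_i|) − 2d)·N(e), where sgn(λ) is −1, 0 or 1 according as λ is negative, zero or positive. -/
/-!
Expanding `N(e - sᵢ eᵢ) = N(e) - 2 sᵢ ⟪e, eᵢ⟫ + sᵢ² N(eᵢ)` with `sᵢ = sgn aᵢ`, the weights `|aᵢ|`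
turn `|aᵢ| sᵢ²` into `|aᵢ|` and `|aᵢ| sᵢ` into `aᵢ`, so the left side is
`(Σ |aᵢ|) N(e) - 2 ⟪e, Σ aᵢ eᵢ⟫`, and `Σ aᵢ eᵢ = d e` gives `⟪e, Σ aᵢ eᵢ⟫ = d N(e)`.
-/

open scoped BigOperators
noncomputable section

variable {F : Type*} [NormedAddCommGroup F] [InnerProductSpace ℝ F]

def Nm (x : F) : ℝ := inner ℝ x x

theorem Nm_eq_norm_sq (x : F) : Nm x = ‖x‖ ^ 2 :=
  real_inner_self_eq_norm_sq x

theorem Nm_sub_smul (x y : F) (c : ℝ) :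
    Nm (x - c • y) = Nm x - 2 * c * inner ℝ x y + c ^ 2 * Nm y := by
  simp only [Nm_eq_norm_sq, norm_sub_sq_real, norm_smul, real_inner_smul_right, mul_pow,
    Real.norm_eq_abs, sq_abs]
  ring

theorem Int.abs_mul_sign_sq (k : ℤ) : |k| * k.sign ^ 2 = |k| := by
  rw [sq, ← mul_assoc, mul_comm |k|, Int.sign_mul_abs, mul_comm, Int.sign_mul_self_eq_abs]

theorem abs_mul_Nm_sub_sign_smul (x y : F) (k : ℤ) :
    |(k : ℝ)| * (Nm (x - (k.sign : ℝ) • y) - Nm y) = |(k : ℝ)| * Nm x - 2 * (k * inner ℝ x y) := by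
  have hsq : |(k : ℝ)| * (k.sign : ℝ) ^ 2 = |(k : ℝ)| := by exact_mod_cast k.abs_mul_sign_sq
  have hsign : |(k : ℝ)| * k.sign = k := by exact_mod_cast (mul_comm _ _).trans k.sign_mul_abs
  rw [Nm_sub_smul]
  linear_combination Nm y * hsq - 2 * inner ℝ x y * hsign

/-- Holds also for `d = 0`, where both sides vanish because `0⁻¹ = 0`. -/
theorem inner_eq_mul_Nm_of_eq_inv_smul {v s : F} {d : ℝ} (hv : v = d⁻¹ • s) :
    inner ℝ v s = d * Nm v := by
  rcases eq_or_ne d 0 with rfl | hd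
  · simp [hv]
  · rw [Nm, ← real_inner_smul_right, hv, smul_inv_smul₀ hd]

theorem watson_identity_general (n : ℕ) (e : Fin n → F) (a : Fin n → ℤ) (d : ℤ)
    (v : F) (hv : v = ((d : ℝ))⁻¹ • ∑ i, (a i : ℝ) • e i) :
    ∑ i, (|a i| : ℝ) * (Nm (v - ((a i).sign : ℝ) • e i) - Nm (e i)) =
      ((∑ i, (|a i| : ℝ)) - 2 * (d : ℝ)) * Nm v := by
  have hinner : ∑ i, (a i : ℝ) * inner ℝ v (e i) = d * Nm v := by
    simp only [← real_inner_smul_right, ← inner_sum]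
    exact inner_eq_mul_Nm_of_eq_inv_smul hv
  simp only [abs_mul_Nm_sub_sign_smul, Finset.sum_sub_distrib, ← Finset.sum_mul,
    ← Finset.mul_sum, hinner]
  ring

/-- Watson's identity: for vectors `e₁,…,eₙ`, integers `a₁,…,aₙ`,
an integer `d > 1` and `e = (a₁e₁ + ⋯ + aₙeₙ)/d`, one has
`Σᵢ |aᵢ|·(N(e - sgn(aᵢ)·eᵢ) - N(eᵢ)) = ((Σᵢ |aᵢ|) - 2d)·N(e)`. -/
theorem watson_identity (n : ℕ) (e : Fin n → F) (a : Fin n → ℤ) (d : ℤ) (hd : 1 < d)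
    (v : F) (hv : v = ((d : ℝ))⁻¹ • ∑ i, (a i : ℝ) • e i) :
    ∑ i, (|a i| : ℝ) * (Nm (v - ((a i).sign : ℝ) • e i) - Nm (e i)) =
      ((∑ i, (|a i| : ℝ)) - 2 * (d : ℝ)) * Nm v :=
  watson_identity_general n e a d v hv

end
end

section
/- (Crude bound) Let e_1, …, e_n be vectors of a real inner product space such that 2·(e_i ⬝ e_j) ≤ N(e_i) for all i < j (equivalently, N(e_j − e_i) ≥ N(e_j) for all i < j), let a_1, …, a_n be nonnegative real numbers and d > 0. Then N((a_1 e_1 + ⋯ + a_n e_n)/d) ≤ (Σ_{i=1}^n a_i·N(e_i)·Σ_{j=i}^n a_j)/d². -/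
/-!
Expanding `N(∑ aᵢ eᵢ)` and grouping the two cross terms of each pair `i < j` gives
`∑ᵢ aᵢ (aᵢ N(eᵢ) + ∑_{j > i} aⱼ · 2⟪eᵢ, eⱼ⟫)`. Since `aᵢ aⱼ ≥ 0`, the hypothesis
`2⟪eᵢ, eⱼ⟫ ≤ N(eᵢ)` bounds each cross term by `aᵢ aⱼ N(eᵢ)`, which sums to the right-hand side.
-/

open scoped BigOperators
noncomputable section

variable {F : Type*} [NormedAddCommGroup F] [InnerProductSpace ℝ F]

theorem Finset.filter_le_eq_insert_filter_lt {ι : Type*} [Fintype ι] [LinearOrder ι] (i : ι) :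
    (Finset.univ.filter fun j => i ≤ j) = insert i (Finset.univ.filter (i < ·)) := by
  ext j
  simp [le_iff_eq_or_lt, eq_comm]

theorem Finset.sum_sum_eq_sum_add_sum_lt {ι M : Type*} [Fintype ι] [LinearOrder ι]
    [AddCommMonoid M] (f : ι → ι → M) :
    ∑ i, ∑ j, f i j = ∑ i, (f i i + ∑ j with i < j, (f i j + f j i)) := by
  have split (i : ι) :
      ∑ j, f i j = f i i + ∑ j with i < j, f i j + ∑ j with j < i, f i j := by
    rw [← Finset.sum_filter_add_sum_filter_not Finset.univ (fun j => i ≤ j),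
      Finset.filter_le_eq_insert_filter_lt, Finset.sum_insert (by simp)]
    simp only [not_le]
  have swap : ∑ i, ∑ j with j < i, f i j = ∑ i, ∑ j with i < j, f j i :=
    Finset.sum_comm' (fun i j => by simp)
  simp only [Finset.sum_add_distrib, split, swap, add_assoc]

theorem Nm_smul (c : ℝ) (x : F) : Nm (c • x) = c ^ 2 * Nm x := by
  simp only [Nm, real_inner_smul_left, real_inner_smul_right]
  ring

theorem Nm_sum_smul {ι : Type*} [Fintype ι] (a : ι → ℝ) (e : ι → F) :
    Nm (∑ i, a i • e i) = ∑ i, ∑ j, a i * a j * inner ℝ (e i) (e j) := by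
  rw [Nm, sum_inner]
  simp_rw [inner_sum, real_inner_smul_left, real_inner_smul_right, mul_assoc]

theorem Nm_sum_smul_le {ι : Type*} [Fintype ι] [LinearOrder ι] (e : ι → F)
    (h : ∀ i j, i < j → 2 * inner ℝ (e i) (e j) ≤ Nm (e i)) (a : ι → ℝ) (ha : ∀ i, 0 ≤ a i) :
    Nm (∑ i, a i • e i) ≤ ∑ i, a i * Nm (e i) * ∑ j with i ≤ j, a j := by
  have pair_le (i j : ι) (hij : i < j) :
      a i * a j * inner ℝ (e i) (e j) + a j * a i * inner ℝ (e j) (e i) ≤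
        a i * Nm (e i) * a j := by
    rw [real_inner_comm (e i) (e j)]
    linarith [mul_le_mul_of_nonneg_left (h i j hij) (mul_nonneg (ha i) (ha j))]
  calc Nm (∑ i, a i • e i)
      = ∑ i, (a i * a i * Nm (e i) + ∑ j with i < j,
          (a i * a j * inner ℝ (e i) (e j) + a j * a i * inner ℝ (e j) (e i))) := by
        rw [Nm_sum_smul, Finset.sum_sum_eq_sum_add_sum_lt]
        rfl
    _ ≤ ∑ i, (a i * a i * Nm (e i) + ∑ j with i < j, a i * Nm (e i) * a j) := by
        gcongr with i _ j hj
        exact pair_le i j (by simpa using hj)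
    _ = ∑ i, a i * Nm (e i) * ∑ j with i ≤ j, a j := by
        refine Finset.sum_congr rfl fun i _ => ?_
        rw [Finset.filter_le_eq_insert_filter_lt, Finset.sum_insert (by simp), mul_add,
          Finset.mul_sum]
        ring

theorem crude_bound_general (n : ℕ) (e : Fin n → F)
    (h : ∀ i j : Fin n, i < j → 2 * (inner ℝ (e i) (e j) : ℝ) ≤ Nm (e i))
    (a : Fin n → ℝ) (ha : ∀ i, 0 ≤ a i) (d : ℝ) :
    Nm (d⁻¹ • ∑ i, a i • e i) ≤
      (∑ i, a i * Nm (e i) * ∑ j ∈ Finset.univ.filter fun j => i ≤ j, a j) / d ^ 2 := by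
  rw [Nm_smul, inv_pow, inv_mul_eq_div]
  gcongr
  exact Nm_sum_smul_le e h a ha

/-- crude bound: if `2·⟪eᵢ, eⱼ⟫ ≤ N(eᵢ)` for all `i < j`, the `aᵢ`
are nonnegative reals and `d > 0`, then
`N((a₁e₁+⋯+aₙeₙ)/d) ≤ (Σᵢ aᵢ·N(eᵢ)·Σ_{j≥i} aⱼ)/d²`. -/
theorem crude_bound (n : ℕ) (e : Fin n → F)
    (h : ∀ i j : Fin n, i < j → 2 * (inner ℝ (e i) (e j) : ℝ) ≤ Nm (e i))
    (a : Fin n → ℝ) (ha : ∀ i, 0 ≤ a i) (d : ℝ) (hd : 0 < d) :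
    Nm (d⁻¹ • ∑ i, a i • e i) ≤
      (∑ i, a i * Nm (e i) * ∑ j ∈ Finset.univ.filter fun j => i ≤ j, a j) / d ^ 2 :=
  crude_bound_general n e h a ha d

end
end

section
/- Let e_1, …, e_n be vectors of a real inner product space with N(e_1) ≤ N(e_2) ≤ ⋯ ≤ N(e_n) and with N(e_j − e_i) ≥ N(e_j) for all i < j, let d > 0, and set e = (e_1 + ⋯ + e_n)/d. Then N(e) ≤ ((n+1)/(2d²))·(N(e_1) + ⋯ + N(e_n)) ≤ (n(n+1)/(2d²))·N(e_n). -/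
open scoped BigOperators
noncomputable section

variable {F : Type*} [NormedAddCommGroup F] [InnerProductSpace ℝ F]

/-!
Write `Sₖ = e₁ + ⋯ + eₖ` and `Aₖ = N(e₁) + ⋯ + N(eₖ)`. The hypothesis `N(eⱼ - eᵢ) ≥ N(eⱼ)` says
`2⟪eᵢ, eⱼ⟫ ≤ N(eᵢ)`, hence `2⟪Sₖ, eₖ₊₁⟫ ≤ Aₖ`, while monotonicity gives `Aₖ ≤ k N(eₖ₊₁)`.
Expanding `N(Sₖ + eₖ₊₁)`, these two bounds carry `2 N(Sₖ) ≤ (k+1) Aₖ`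
from `k` to `k + 1`.
-/

theorem Nm_add (x y : F) : Nm (x + y) = Nm x + 2 * inner ℝ x y + Nm y :=
  real_inner_add_add_self x y

theorem Nm_sub (x y : F) : Nm (x - y) = Nm x - 2 * inner ℝ x y + Nm y :=
  real_inner_sub_sub_self x y

theorem two_inner_le_Nm_of_Nm_le_Nm_sub {x y : F} (h : Nm y ≤ Nm (y - x)) :
    2 * inner ℝ x y ≤ Nm x := by
  rw [Nm_sub, real_inner_comm] at h
  linarith

theorem two_inner_sum_le_sum_Nm {ι : Type*} (s : Finset ι) (y : ι → F) {x : F}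
    (h : ∀ i ∈ s, Nm x ≤ Nm (x - y i)) :
    2 * inner ℝ (∑ i ∈ s, y i) x ≤ ∑ i ∈ s, Nm (y i) := by
  rw [sum_inner, Finset.mul_sum]
  exact Finset.sum_le_sum fun i hi => two_inner_le_Nm_of_Nm_le_Nm_sub (h i hi)

theorem two_mul_Nm_sum_le {n : ℕ} (e : Fin n → F)
    (hmono : ∀ i j : Fin n, i ≤ j → Nm (e i) ≤ Nm (e j))
    (hdiff : ∀ i j : Fin n, i < j → Nm (e j) ≤ Nm (e j - e i)) :
    2 * Nm (∑ i, e i) ≤ ((n : ℝ) + 1) * ∑ i, Nm (e i) := by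
  induction n with
  | zero => simp [Nm]
  | succ k ih =>
    have hS := ih (fun i => e i.castSucc) (fun i j hij => hmono _ _ hij)
      (fun i j hij => hdiff _ _ (Fin.castSucc_lt_castSucc_iff.mpr hij))
    have hinner : 2 * inner ℝ (∑ i : Fin k, e i.castSucc) (e (Fin.last k)) ≤
        ∑ i : Fin k, Nm (e i.castSucc) :=
      two_inner_sum_le_sum_Nm _ _ fun i _ => hdiff _ _ (Fin.castSucc_lt_last i)
    have hlast : ∑ i : Fin k, Nm (e i.castSucc) ≤ k * Nm (e (Fin.last k)) := by
      simpa using Finset.sum_le_card_nsmul Finset.univ _ _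
        fun i _ => hmono _ _ (Fin.castSucc_lt_last i).le
    rw [Fin.sum_univ_castSucc, Fin.sum_univ_castSucc, Nm_add]
    push_cast
    linarith

/-- if `N(e₁) ≤ ⋯ ≤ N(eₙ)`, `N(eⱼ - eᵢ) ≥ N(eⱼ)` for `i < j`, `d > 0`
and `e = (e₁+⋯+eₙ)/d`, then
`N(e) ≤ ((n+1)/(2d²))·(N(e₁)+⋯+N(eₙ)) ≤ (n(n+1)/(2d²))·N(eₙ)`. -/
theorem crude_bound_equal_coeffs (n : ℕ) (hn : 1 ≤ n) (e : Fin n → F)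
    (hmono : ∀ i j : Fin n, i ≤ j → Nm (e i) ≤ Nm (e j))
    (hdiff : ∀ i j : Fin n, i < j → Nm (e j) ≤ Nm (e j - e i))
    (d : ℝ) :
    Nm (d⁻¹ • ∑ i, e i) ≤ ((n : ℝ) + 1) / (2 * d ^ 2) * ∑ i, Nm (e i) ∧
      ((n : ℝ) + 1) / (2 * d ^ 2) * ∑ i, Nm (e i) ≤
        (n : ℝ) * ((n : ℝ) + 1) / (2 * d ^ 2) * Nm (e ⟨n - 1, by omega⟩) := by
  have hsum : ∑ i, Nm (e i) ≤ n * Nm (e ⟨n - 1, by omega⟩) := by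
    simpa using Finset.sum_le_card_nsmul Finset.univ (fun i => Nm (e i)) _
      fun i _ => hmono i _ (Nat.le_sub_one_of_lt i.isLt)
  constructor
  · calc Nm (d⁻¹ • ∑ i, e i) = Nm (∑ i, e i) / d ^ 2 := by rw [Nm_smul]; ring
      _ ≤ ((n + 1) * ∑ i, Nm (e i)) / 2 / d ^ 2 := by
        gcongr
        linarith [two_mul_Nm_sum_le e hmono hdiff]
      _ = ((n : ℝ) + 1) / (2 * d ^ 2) * ∑ i, Nm (e i) := by ring
  · calc ((n : ℝ) + 1) / (2 * d ^ 2) * ∑ i, Nm (e i)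
        ≤ ((n : ℝ) + 1) / (2 * d ^ 2) * (n * Nm (e ⟨n - 1, by omega⟩)) := by gcongr
      _ = (n : ℝ) * ((n : ℝ) + 1) / (2 * d ^ 2) * Nm (e ⟨n - 1, by omega⟩) := by ring

end
end

section
/- Let d ≥ 3 and n be integers with d + 2 ≤ n ≤ 3d + 1, let e_1, …, e_n be vectors of a real inner product space with N(e_m) ≤ 1 for all m, set e = (e_1 + ⋯ + e_n)/d, and assume N(e) ≥ 1 and N(e − e_i − e_n) ≥ 1 for every i < n. Then there exists a vector y, equal either to e or to e − e_i − e_j for some indices i < j ≤ n−1, such that N(y) ≤ (n² − 3n + 1) / ((2d−1)n − (d² + 2d − 1)). -/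
/-!
Sum `N(e - eᵢ - eⱼ)` over all ordered pairs `i ≠ j`. Since `e₁ + ⋯ + eₙ = d e`, expanding the
inner products gives exactly `A N(e) + (2n - 4) ∑ N(eᵢ)` with `A = n² - n + 2d² + 4d - 4nd`, and
`A ≤ 0` in the range `d + 2 ≤ n ≤ 3d + 1`. Let `c` be the least value of `N` on the candidates.
The pairs containing `n` contribute at least `1` each and all other pairs at least `c`, while
`N(e) ≥ c` and `N(eᵢ) ≤ 1` bound the sum from above; comparing the two bounds is the claim.
-/

open scoped BigOperators
noncomputable section

variable {F : Type*} [NormedAddCommGroup F] [InnerProductSpace ℝ F]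

open Finset
open scoped InnerProductSpace

theorem Nm_sub_sub (v x y : F) :
    Nm (v - x - y) = Nm v + Nm x + Nm y + 2 * ⟪x, y⟫_ℝ - 2 * ⟪v, x⟫_ℝ - 2 * ⟪v, y⟫_ℝ := by
  simp only [Nm, inner_sub_left, inner_sub_right, real_inner_comm x v, real_inner_comm y v,
    real_inner_comm y x]
  ring

section Averaging

variable {ι : Type*} [Fintype ι]

theorem sum_inner_eq_mul_Nm {e : ι → F} {v : F} {d : ℝ} (hsum : ∑ i, e i = d • v) :
    ∑ i, ⟪v, e i⟫_ℝ = d * Nm v := by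
  rw [← inner_sum, hsum, real_inner_smul_right, Nm]

theorem sum_sum_Nm_sub_sub {e : ι → F} {v : F} {d : ℝ} (hsum : ∑ i, e i = d • v) :
    ∑ i, ∑ j, Nm (v - e i - e j) =
      ((Fintype.card ι : ℝ) ^ 2 + 2 * d ^ 2 - 4 * Fintype.card ι * d) * Nm v
        + 2 * Fintype.card ι * ∑ i, Nm (e i) := by
  have hee : ∑ i, ∑ j, ⟪e i, e j⟫_ℝ = d ^ 2 * Nm v := by
    simp_rw [← inner_sum, ← sum_inner, hsum, real_inner_smul_left, real_inner_smul_right, Nm]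
    ring
  simp only [Nm_sub_sub, sum_add_distrib, sum_sub_distrib, sum_const, card_univ, nsmul_eq_mul,
    ← mul_sum, sum_inner_eq_mul_Nm hsum, hee]
  ring

theorem sum_Nm_sub_sub_self {e : ι → F} {v : F} {d : ℝ} (hsum : ∑ i, e i = d • v) :
    ∑ i, Nm (v - e i - e i) = ((Fintype.card ι : ℝ) - 4 * d) * Nm v + 4 * ∑ i, Nm (e i) := by
  have hself : ∀ x : F, ⟪x, x⟫_ℝ = Nm x := fun _ => rfl
  simp only [Nm_sub_sub, hself, sum_add_distrib, sum_sub_distrib, sum_const, card_univ,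
    nsmul_eq_mul, ← mul_sum, sum_inner_eq_mul_Nm hsum]
  ring

variable [DecidableEq ι]

theorem sum_sum_erase_Nm_sub_sub {e : ι → F} {v : F} {d : ℝ} (hsum : ∑ i, e i = d • v) :
    ∑ i, ∑ j ∈ univ.erase i, Nm (v - e i - e j) =
      ((Fintype.card ι : ℝ) ^ 2 - Fintype.card ι + 2 * d ^ 2 + 4 * d - 4 * Fintype.card ι * d)
        * Nm v + (2 * Fintype.card ι - 4) * ∑ i, Nm (e i) := by
  simp only [sum_erase_eq_sub (mem_univ _), sum_sub_distrib, sum_sum_Nm_sub_sub hsum,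
    sum_Nm_sub_sub_self hsum]
  ring

theorem le_sum_sum_erase {f : ι → ι → ℝ} {c : ℝ} (m : ι) (hsymm : ∀ i j, f i j = f j i)
    (hm : ∀ i ≠ m, 1 ≤ f i m) (hc : ∀ i j, i ≠ j → i ≠ m → j ≠ m → c ≤ f i j) :
    2 * ((Fintype.card ι : ℝ) - 1) + ((Fintype.card ι : ℝ) - 1) * (Fintype.card ι - 2) * c ≤
      ∑ i, ∑ j ∈ univ.erase i, f i j := by
  have row_m : (Fintype.card ι : ℝ) - 1 ≤ ∑ j ∈ univ.erase m, f m j := by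
    have := card_nsmul_le_sum (univ.erase m) (f m) 1 fun j hj =>
      hsymm m j ▸ hm j (ne_of_mem_erase hj)
    rwa [nsmul_eq_mul, cast_card_erase_of_mem (mem_univ m), card_univ, mul_one] at this
  have row : ∀ i ≠ m, 1 + ((Fintype.card ι : ℝ) - 2) * c ≤ ∑ j ∈ univ.erase i, f i j := by
    intro i hi
    have hmi : m ∈ univ.erase i := mem_erase.2 ⟨hi.symm, mem_univ m⟩
    have rest := card_nsmul_le_sum ((univ.erase i).erase m) (f i) c fun j hj =>
      hc i j (ne_of_mem_erase (mem_of_mem_erase hj)).symm hi (ne_of_mem_erase hj)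
    rw [nsmul_eq_mul, cast_card_erase_of_mem hmi, cast_card_erase_of_mem (mem_univ i),
      card_univ] at rest
    rw [← add_sum_erase _ _ hmi]
    linarith [hm i hi]
  have rows := card_nsmul_le_sum (univ.erase m) _ _ fun i hi => row i (ne_of_mem_erase hi)
  rw [nsmul_eq_mul, cast_card_erase_of_mem (mem_univ m), card_univ] at rows
  rw [← add_sum_erase _ _ (mem_univ m)]
  linarith

theorem mul_le_of_le_Nm_sub_sub {e : ι → F} {v : F} {d c : ℝ} (m : ι)
    (hsum : ∑ i, e i = d • v) (he : ∀ i, Nm (e i) ≤ 1) (hcard : 2 ≤ Fintype.card ι)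
    (hA : (Fintype.card ι : ℝ) ^ 2 - Fintype.card ι + 2 * d ^ 2 + 4 * d
      - 4 * Fintype.card ι * d ≤ 0)
    (hv : c ≤ Nm v) (hm : ∀ i ≠ m, 1 ≤ Nm (v - e i - e m))
    (hc : ∀ i j, i ≠ j → i ≠ m → j ≠ m → c ≤ Nm (v - e i - e j)) :
    c * ((2 * d - 1) * Fintype.card ι - (d ^ 2 + 2 * d - 1)) ≤
      (Fintype.card ι : ℝ) ^ 2 - 3 * Fintype.card ι + 1 := by
  have lower := le_sum_sum_erase m (fun i j => by rw [sub_right_comm]) hm hc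
  rw [sum_sum_erase_Nm_sub_sub hsum] at lower
  have hS : ∑ i, Nm (e i) ≤ Fintype.card ι := by
    simpa using sum_le_sum fun i (_ : i ∈ univ) => he i
  have hcard' : (0 : ℝ) ≤ 2 * Fintype.card ι - 4 := by
    have : (2 : ℝ) ≤ Fintype.card ι := by exact_mod_cast hcard
    linarith
  linarith [mul_le_mul_of_nonpos_left hv hA, mul_le_mul_of_nonneg_left hS hcard']

end Averaging

/-- let `d ≥ 3`, `d+2 ≤ n ≤ 3d+1`, `N(eₘ) ≤ 1` for all `m`,
`e = (e₁+⋯+eₙ)/d`, `N(e) ≥ 1` and `N(e-eᵢ-eₙ) ≥ 1` for all `i < n`. Then some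
vector `y`, equal to `e` or to some `e-eᵢ-eⱼ` with `i < j ≤ n-1`, satisfies
`N(y) ≤ (n²-3n+1)/((2d-1)n-(d²+2d-1))`. -/
theorem psi_bound (d n : ℕ) (hd : 3 ≤ d) (hn1 : d + 2 ≤ n) (hn2 : n ≤ 3 * d + 1)
    (e : Fin n → F) (he : ∀ m, Nm (e m) ≤ 1)
    (v : F) (hv : v = ((d : ℝ))⁻¹ • ∑ i, e i)
    (hlast : ∀ i : Fin n, (i : ℕ) < n - 1 → 1 ≤ Nm (v - e i - e ⟨n - 1, by omega⟩)) :
    ∃ y : F,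
      (y = v ∨ ∃ i j : Fin n, i < j ∧ (j : ℕ) < n - 1 ∧ y = v - e i - e j) ∧
      Nm y ≤ ((n : ℝ) ^ 2 - 3 * (n : ℝ) + 1) /
        ((2 * (d : ℝ) - 1) * (n : ℝ) - ((d : ℝ) ^ 2 + 2 * (d : ℝ) - 1)) := by
  have hdR : (3 : ℝ) ≤ d := by exact_mod_cast hd
  have hn1R : (d : ℝ) + 2 ≤ n := by exact_mod_cast hn1
  have hn2R : (n : ℝ) ≤ 3 * d + 1 := by exact_mod_cast hn2
  have hsum : ∑ i, e i = (d : ℝ) • v := by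
    rw [hv, smul_smul, mul_inv_cancel₀ (by positivity), one_smul]
  set candidates := {y | y = v ∨ ∃ i j : Fin n, i < j ∧ (j : ℕ) < n - 1 ∧ y = v - e i - e j}
  have finite : candidates.Finite :=
    ((Set.finite_range fun p : Fin n × Fin n => v - e p.1 - e p.2).insert v).subset <| by
      rintro y (rfl | ⟨i, j, -, -, rfl⟩)
      exacts [Set.mem_insert _ _, Set.mem_insert_of_mem _ ⟨(i, j), rfl⟩]
  obtain ⟨y, hy, hmin⟩ := candidates.exists_min_image Nm finite ⟨v, Or.inl rfl⟩
  refine ⟨y, hy, ?_⟩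
  set m : Fin n := ⟨n - 1, by omega⟩
  have lt_of_ne : ∀ i : Fin n, i ≠ m → (i : ℕ) < n - 1 := fun i hi => by
    have : (i : ℕ) ≠ n - 1 := fun h => hi (Fin.ext h)
    omega
  have key := mul_le_of_le_Nm_sub_sub m hsum he (by rw [Fintype.card_fin]; omega)
    (by rw [Fintype.card_fin]; nlinarith) (hmin v (Or.inl rfl))
    (fun i hi => hlast i (lt_of_ne i hi)) fun i j hij hi hj => by
      rcases hij.lt_or_gt with h | h
      · exact hmin _ (Or.inr ⟨i, j, h, lt_of_ne j hj, rfl⟩)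
      · rw [sub_right_comm]
        exact hmin _ (Or.inr ⟨j, i, h, lt_of_ne i hi, rfl⟩)
  rw [Fintype.card_fin] at key
  rwa [le_div_iff₀ (by nlinarith)]

end
end
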